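/- The concatenation descends to the stabilized simplex categories: the assignment sending objects ([n],[m]) to [n+m+1] and sending morphisms θ:[n]→[n'] of Δ_st' and τ:[m]→[m'] of Δ_st to the map θ⋆τ:ℤ→ℤ defined by (θ⋆τ)(i)=θ(i) for i≤n and (θ⋆τ)(i)=τ(i−n−1)+n'+1 for i≥n+1 yields a well-defined functor ⋆:Δ_st'×Δ_st→Δ_st²; in particular θ⋆τ is a morphism [n+m+1]→[n'+m'+1] of Δ_st², the assignment preserves identities, and (θ'∘θ)⋆(τ'∘τ)=(θ'⋆τ')∘(θ⋆τ). -/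
import Mathlib


/-- A function `f : ℕ → ℕ` is a morphism `[m] → [n]` of the stable simplex category `Δ_st`
(objects: symbols `[m]` for `m ∈ ℤ`) when it is order-preserving and satisfies
`f(i) = i + (n - m)` for all sufficiently large `i`.  Composition is composition of maps. -/
def IsStableHom (m n : ℤ) (f : ℕ → ℕ) : Prop :=
  Monotone f ∧ ∃ N : ℕ, ∀ i ≥ N, (f i : ℤ) = (i : ℤ) + (n - m)

/-- A function `f : ℤ → ℤ` represents a morphism `[m] → [n]` of the dually stabilized
simplex category `Δ_st'` when it is order-preserving on `{i : i ≤ m}`, maps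
`{i : i ≤ m}` into `{i : i ≤ n}` and satisfies `f(i) = i` for all sufficiently small
`i`.  Two such functions represent the same morphism exactly when they agree on
`{i : i ≤ m}`. -/
def IsStableHom' (m n : ℤ) (f : ℤ → ℤ) : Prop :=
  (∀ i j : ℤ, i ≤ j → j ≤ m → f i ≤ f j) ∧ (∀ i : ℤ, i ≤ m → f i ≤ n) ∧
    ∃ N : ℤ, ∀ i ≤ N, f i = i

/-- A function `f : ℤ → ℤ` is a morphism `[m] → [n]` of the doubly stabilized simplex
category `Δ_st²` when it is order-preserving, `f(i) = i` for all sufficiently small `i`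
and `f(i) = i + (n - m)` for all sufficiently large `i`. -/
def IsStableHom2 (m n : ℤ) (f : ℤ → ℤ) : Prop :=
  Monotone f ∧ (∃ N : ℤ, ∀ i ≤ N, f i = i) ∧ ∃ N : ℤ, ∀ i ≥ N, f i = i + (n - m)

/-- The concatenation of `θ : [n] → [n']` in `Δ_st'` and `τ : [m] → [m']` in `Δ_st`:
the map `θ ⋆ τ : ℤ → ℤ` with `(θ ⋆ τ)(i) = θ(i)` for `i ≤ n` and
`(θ ⋆ τ)(i) = τ(i - n - 1) + n' + 1` for `i ≥ n + 1`. -/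
def starSt (n n' : ℤ) (θ : ℤ → ℤ) (τ : ℕ → ℕ) : ℤ → ℤ :=
  fun i => if i ≤ n then θ i else (τ (i - n - 1).toNat : ℤ) + n' + 1

/-- The concatenation descends to a well-defined functor `⋆ : Δ_st' × Δ_st → Δ_st²`:
it is independent of the chosen representative of a `Δ_st'`-morphism, `θ ⋆ τ` is a
morphism `[n+m+1] → [n'+m'+1]` of `Δ_st²`, identities are sent to identities, and
composition is preserved. -/
theorem starSt_is_functor :
    (∀ (n n' : ℤ) (θ θ' : ℤ → ℤ) (τ : ℕ → ℕ), (∀ i ≤ n, θ i = θ' i) →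
        starSt n n' θ τ = starSt n n' θ' τ) ∧
    (∀ (n n' m m' : ℤ) (θ : ℤ → ℤ) (τ : ℕ → ℕ),
        IsStableHom' n n' θ → IsStableHom m m' τ →
        IsStableHom2 (n + m + 1) (n' + m' + 1) (starSt n n' θ τ)) ∧
    (∀ n : ℤ, starSt n n id id = id) ∧
    (∀ (n n' n'' m m' m'' : ℤ) (θ θ' : ℤ → ℤ) (τ τ' : ℕ → ℕ),
        IsStableHom' n n' θ → IsStableHom' n' n'' θ' →
        IsStableHom m m' τ → IsStableHom m' m'' τ' →
        starSt n n'' (θ' ∘ θ) (τ' ∘ τ) = starSt n' n'' θ' τ' ∘ starSt n n' θ τ) := by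
  refine ⟨?_, ?_, ?_, ?_⟩
  · intro n n' θ θ' τ h
    funext i
    simp only [starSt]
    split_ifs with hi
    · exact h i hi
    · rfl
  · rintro n n' m m' θ τ ⟨hθmono, hθle, Nθ, hθ⟩ ⟨hτmono, Nτ, hτ⟩
    refine ⟨?_, ⟨min Nθ n, ?_⟩, ⟨n + 1 + (Nτ : ℤ), ?_⟩⟩
    · intro i j hij
      simp only [starSt]
      split_ifs with hi hj hj
      · exact hθmono i j hij hj
      · have h1 := hθle i hi
        have h2 : (0 : ℤ) ≤ (τ (j - n - 1).toNat : ℤ) := Int.natCast_nonneg _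
        omega
      · omega
      · have h1 : (i - n - 1).toNat ≤ (j - n - 1).toNat := by omega
        have h2 := hτmono h1
        omega
    · intro i hi
      simp only [starSt, if_pos (le_trans hi (min_le_right _ _))]
      exact hθ i (le_trans hi (min_le_left _ _))
    · intro i hi
      have hn : ¬ i ≤ n := by omega
      simp only [starSt, if_neg hn]
      have hk : (i - n - 1).toNat ≥ Nτ := by omega
      have h2 := hτ _ hk
      omega
  · intro n
    funext i
    simp only [starSt, id]
    split_ifs with hi
    · rfl
    · omega
  · rintro n n' n'' m m' m'' θ θ' τ τ' ⟨hθmono, hθle, Nθ, hθ⟩ _ _ _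
    funext i
    by_cases hi : i ≤ n
    · simp only [starSt, Function.comp_apply, if_pos hi]
      rw [if_pos (hθle i hi)]
    · simp only [starSt, Function.comp_apply, if_neg hi]
      have h1 : ¬ ((τ (i - n - 1).toNat : ℤ) + n' + 1 ≤ n') := by
        have := Int.natCast_nonneg (τ (i - n - 1).toNat)
        omega
      rw [if_neg h1]
      have h2 : ((τ (i - n - 1).toNat : ℤ) + n' + 1 - n' - 1).toNat
          = τ (i - n - 1).toNat := by omega
      rw [h2]
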